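/- Let P = (p(i,j))_{i,j≥0} be the cookie environment matrix of a cookie environment C = (p_1,…,p_M; q), and let a ≤ a' be such that a ↔ a' (mutual accessibility: p^{(n)}(a,a') > 0 and p^{(m)}(a',a) > 0 for some n,m ≥ 1). Then the finite sub-matrix (p(i,j))_{a ≤ i,j ≤ a'} is irreducible: for all i,j ∈ [a,a'] there is a path i = n_0, n_1, …, n_m = j contained in [a,a'] with p(n_{t−1}, n_t) > 0 for all t. -/

import Mathlib

open MeasureTheory ProbabilityTheory Filter Topology
open scoped ENNReal NNReal

namespace CookieRW

/-- A cookie environment `𝒞 = (p 1, …, p M ; q)`.  Only the values `p 1, …, p M`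
of the strength function are relevant. -/
structure Env where
  M : ℕ
  hM : 1 ≤ M
  p : ℕ → ℝ
  hp : ∀ i, 1 ≤ i → i ≤ M → 0 ≤ p i ∧ p i < 1
  q : ℝ
  hq0 : 0 < q
  hq1 : q < 1

namespace Env

/-- strength of the excitation received on the `j`-th visit to a site
(`q` after the `M` cookies have been eaten). -/
def str (C : Env) (j : ℕ) : ℝ := if j ≤ C.M then C.p j else C.q

/-- canonical componentwise partial order on cookie environments -/
def le (C C' : Env) : Prop :=
  C.M = C'.M ∧ (∀ i, 1 ≤ i → i ≤ C.M → C.p i ≤ C'.p i) ∧ C.q ≤ C'.q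

end Env

/-- vertices of the rooted `b`-ary tree: the root is `[]` and the children of `x`
are the lists `i :: x`, `i : Fin b`. -/
abbrev Vertex (b : ℕ) := List (Fin b)

def root (b : ℕ) : Vertex b := []

/-- the father of a vertex (the father of the root is the root itself). -/
def father {b : ℕ} (x : Vertex b) : Vertex b := x.tail

def child {b : ℕ} (x : Vertex b) (i : Fin b) : Vertex b := i :: x

/-- number of visits of the trajectory `h` to its position at time `n`,
up to and including time `n`. -/
def visits {b : ℕ} (h : ℕ → Vertex b) (n : ℕ) : ℕ :=
  ((Finset.range (n + 1)).filter fun k => h k = h n).card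

/-- `X` is a `C` cookie (multi-excited) random walk on the rooted `b`-ary tree,
under the probability measure `P`. -/
def IsCRW {Ω : Type*} [MeasurableSpace Ω] (b : ℕ) (C : Env)
    (P : Measure Ω) (X : ℕ → Ω → Vertex b) : Prop :=
  (∀ n x, MeasurableSet {ω | X n ω = x}) ∧
  P {ω | X 0 ω = root b} = 1 ∧
  ∀ (n : ℕ) (h : ℕ → Vertex b),
    P {ω | ∀ k ≤ n, X k ω = h k} ≠ 0 →
      (∀ i : Fin b,
        (P[|{ω | ∀ k ≤ n, X k ω = h k}]) {ω | X (n + 1) ω = child (h n) i}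
          = ENNReal.ofReal (C.str (visits h n) / b)) ∧
      (P[|{ω | ∀ k ≤ n, X k ω = h k}]) {ω | X (n + 1) ω = father (h n)}
          = ENNReal.ofReal (1 - C.str (visits h n))

/-- the walk visits every vertex infinitely often, almost surely. -/
def Recurrent {Ω : Type*} [MeasurableSpace Ω] {b : ℕ}
    (P : Measure Ω) (X : ℕ → Ω → Vertex b) : Prop :=
  ∀ x : Vertex b, P {ω | {n : ℕ | X n ω = x}.Infinite} = 1

/-- `|X_n| → ∞` almost surely. -/
def Transient {Ω : Type*} [MeasurableSpace Ω] {b : ℕ}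
    (P : Measure Ω) (X : ℕ → Ω → Vertex b) : Prop :=
  P {ω | Tendsto (fun n => (X n ω).length) atTop atTop} = 1

/-- successive return times of the walk to the root (`sInf ∅ = ⊤ = ∞`). -/
noncomputable def tau {Ω : Type*} {b : ℕ} (X : ℕ → Ω → Vertex b) : ℕ → Ω → ℕ∞
  | 0 => fun _ => 0
  | k + 1 => fun ω =>
      sInf {t : ℕ∞ | ∃ m : ℕ, t = (m : ℕ∞) ∧ tau X k ω < (m : ℕ∞) ∧ X m ω = root b}

/-- distribution of `ξ_i` : `xiProb b C i v = P(ξ_i = v)` for `v ∈ {0, …, b}`. -/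
noncomputable def xiProb (b : ℕ) (C : Env) (i v : ℕ) : ℝ :=
  if v = 0 then 1 - C.str i else if v ≤ b then C.str i / b else 0

/-- probability of a given realization `e` of `(ξ_1, …, ξ_N)`. -/
noncomputable def seqWeight (b : ℕ) (C : Env) {N : ℕ} (e : Fin N → Fin (b + 1)) : ℝ :=
  ∏ k, xiProb b C (k.1 + 1) (e k).1

/-- the cookie environment matrix `p(i,j)` : the probability that exactly `j` of the
`ξ`'s take the value `1` before the `i`-th failure in the sequence `(ξ_1, ξ_2, …)`,
obtained by decomposing over the time `N` of the `i`-th failure. -/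
noncomputable def pMat (b : ℕ) (C : Env) (i j : ℕ) : ℝ :=
  if i = 0 then (if j = 0 then 1 else 0)
  else
    ∑' N : ℕ,
      ∑ e ∈ Finset.univ.filter (fun e : Fin N → Fin (b + 1) =>
          (Finset.univ.filter fun k => (e k).1 = 0).card = i ∧
          (Finset.univ.filter fun k => (e k).1 = 1).card = j ∧
          ∀ k : Fin N, k.1 + 1 = N → (e k).1 = 0),
        seqWeight b C e

/-- entries `p^{(n)}(i,j)` of the `n`-th power of the matrix `P`. -/
noncomputable def pPow (b : ℕ) (C : Env) : ℕ → ℕ → ℕ → ℝ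
  | 0 => fun i j => if i = j then 1 else 0
  | n + 1 => fun i j => ∑' k : ℕ, pPow b C n i k * pMat b C k j

/-- accessibility `i → j` for the matrix `P`. -/
def acc (b : ℕ) (C : Env) (i j : ℕ) : Prop := ∃ n, 1 ≤ n ∧ 0 < pPow b C n i j

/-- mutual accessibility `i ↔ j`. -/
def macc (b : ℕ) (C : Env) (i j : ℕ) : Prop := acc b C i j ∧ acc b C j i

/-- the spectral radius `lim_n (p^{(n)}(i,i))^{1/n}` of the irreducible class of `i`
(a path from `i` to `i` stays inside the class of `i`). -/
noncomputable def classRadius (b : ℕ) (C : Env) (i : ℕ) : ℝ :=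
  limsup (fun n : ℕ => (pPow b C n i i) ^ ((n : ℝ)⁻¹)) atTop

/-- `λ(𝒞)` : the largest spectral radius of the irreducible classes of `P`
other than `{0}`. -/
noncomputable def lambdaC (b : ℕ) (C : Env) : ℝ :=
  sSup {x : ℝ | ∃ i, 1 ≤ i ∧ macc b C i i ∧ x = classRadius b C i}

/-- the quantity `λ_sym(𝒞)` of Theorem 1.5. -/
noncomputable def lambdaSym (b : ℕ) (C : Env) : ℝ :=
  (C.q / (b * (1 - C.q))) *
    ∏ i ∈ Finset.Icc 1 C.M,
      ((1 - C.p i) * (C.q / (b * (1 - C.q))) + (b - 1) * C.p i / b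
        + (C.p i / b) * (C.q / (b * (1 - C.q)))⁻¹)

/-- the left endpoint `l_K` of the unique infinite irreducible class of `P`
(the class of `M + 1`). -/
noncomputable def lK (b : ℕ) (C : Env) : ℕ := sInf {i | macc b C i (C.M + 1)}

/-- joint law of the positions of the `b` children of a particle located at `j0`:
`childLaw b C j0 j` is the probability that, among `ξ_1, …, ξ_{j0 + j 1 + … + j b}`,
exactly `j0` of them equal `0`, exactly `j k` of them equal `k` for `k ∈ {1, …, b}`,
and the last one equals `0`. -/
noncomputable def childLaw (b : ℕ) (C : Env) (j0 : ℕ) (j : Fin b → ℕ) : ℝ :=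
  if j0 = 0 then (if ∀ i, j i = 0 then 1 else 0)
  else
    ∑ e ∈ Finset.univ.filter (fun e : Fin (j0 + ∑ i, j i) → Fin (b + 1) =>
        (Finset.univ.filter fun k => (e k).1 = 0).card = j0 ∧
        (∀ i : Fin b, (Finset.univ.filter fun k => (e k).1 = i.1 + 1).card = j i) ∧
        ∀ k, k.1 + 1 = j0 + ∑ i, j i → (e k).1 = 0),
      seqWeight b C e

/-- `ℓ` is (a realization of) the branching Markov chain `L` associated with the
cookie environment `C`, started from one particle located at `k` (the measure `P_k`):
particles are indexed by the vertices of the tree, and, conditionally on the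
positions of the particles up to generation `n`, the children vectors of the
particles of generation `n` are independent with joint law `childLaw`. -/
def IsBMC {Ω : Type*} [MeasurableSpace Ω] (b : ℕ) (C : Env) (P : Measure Ω)
    (ℓ : Vertex b → Ω → ℕ) (k : ℕ) : Prop :=
  (∀ x m, MeasurableSet {ω | ℓ x ω = m}) ∧
  P {ω | ℓ (root b) ω = k} = 1 ∧
  ∀ (n : ℕ) (g f : Vertex b → ℕ),
    P {ω | ∀ y : Vertex b, y.length ≤ n → ℓ y ω = g y} ≠ 0 →
      (P[|{ω | ∀ y : Vertex b, y.length ≤ n → ℓ y ω = g y}])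
          {ω | ∀ x : Vertex b, x.length = n + 1 → ℓ x ω = f x}
        = ENNReal.ofReal
            (∏ v : Fin n → Fin b,
              childLaw b C (g (List.ofFn v)) fun i => f (i :: List.ofFn v))

/-- the branching Markov chain dies out : at some generation all particles are at `0`. -/
def DiesOut {Ω : Type*} {b : ℕ} (ℓ : Vertex b → Ω → ℕ) (ω : Ω) : Prop :=
  ∃ n : ℕ, ∀ x : Vertex b, x.length = n → ℓ x ω = 0

/-- `Z` is a Markov chain on `ℕ` with transition matrix the cookie environment
matrix `P`, started from `i0`. -/
def IsChainP {Ω : Type*} [MeasurableSpace Ω] (b : ℕ) (C : Env) (P : Measure Ω)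
    (Z : ℕ → Ω → ℕ) (i0 : ℕ) : Prop :=
  (∀ n m, MeasurableSet {ω | Z n ω = m}) ∧
  P {ω | Z 0 ω = i0} = 1 ∧
  ∀ (n : ℕ) (h : ℕ → ℕ),
    P {ω | ∀ k ≤ n, Z k ω = h k} ≠ 0 →
      ∀ j, (P[|{ω | ∀ k ≤ n, Z k ω = h k}]) {ω | Z (n + 1) ω = j}
        = ENNReal.ofReal (pMat b C (h n) j)

/-- the largest positive eigenvalue `ν(p₁,p₂)` of the matrix of Proposition 1.7. -/
noncomputable def nu (b : ℕ) (p1 p2 : ℝ) : ℝ :=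
  (1 / (2 * (b : ℝ) ^ 2)) *
    (((b : ℝ) - 1) * p1 * p2 + b * p1 +
      Real.sqrt (((b : ℝ) ^ 2 - 6 * b + 1) * p1 ^ 2 * p2 ^ 2
        + 2 * b * ((b : ℝ) - 1) * p1 ^ 2 * p2 + (b : ℝ) ^ 2 * p1 ^ 2
        + 4 * b * p1 * p2 ^ 2))

/-- `s = q / (q + (1-q) b)`. -/
noncomputable def sC (b : ℕ) (C : Env) : ℝ := C.q / (C.q + (1 - C.q) * b)

/-- probability of the event `E_{m,n}` : among `(ξ_1, …, ξ_M)` there are at least `m`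
terms equal to `0` and exactly `n` terms equal to `1` before the `m`-th `0`. -/
noncomputable def probE (b : ℕ) (C : Env) (m n : ℕ) : ℝ :=
  ∑ e ∈ Finset.univ.filter (fun e : Fin C.M → Fin (b + 1) =>
      ∃ t : Fin C.M, (e t).1 = 0 ∧
        (Finset.univ.filter fun k => k ≤ t ∧ (e k).1 = 0).card = m ∧
        (Finset.univ.filter fun k => k < t ∧ (e k).1 = 1).card = n),
    seqWeight b C e

/-- probability of the event `E'_{m,n}` : among `(ξ_1, …, ξ_M)` there are exactly `m`
terms equal to `0` and exactly `n` terms equal to `1`. -/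
noncomputable def probE' (b : ℕ) (C : Env) (m n : ℕ) : ℝ :=
  ∑ e ∈ Finset.univ.filter (fun e : Fin C.M → Fin (b + 1) =>
      (Finset.univ.filter fun k => (e k).1 = 0).card = m ∧
      (Finset.univ.filter fun k => (e k).1 = 1).card = n),
    seqWeight b C e

/-- the correction term `A(j)` of Lemma 7.3. -/
noncomputable def Afun (b : ℕ) (C : Env) (j : ℕ) : ℝ :=
  (∑ i ∈ Finset.Icc 1 (C.M - j), probE b C i j * (sC b C / (1 - sC b C)) ^ (i - 1))
    - ∑ n ∈ Finset.Icc (j + 1) C.M, ∑ m ∈ Finset.range (C.M - n + 1),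
        probE' b C m n * (sC b C / (1 - sC b C)) ^ ((j : ℤ) + m - n)

/-- entries of the `n`-th power of the sub-matrix `(p(i,j))_{i,j ≥ l}`. -/
noncomputable def pPowFrom (b : ℕ) (C : Env) (l : ℕ) : ℕ → ℕ → ℕ → ℝ
  | 0 => fun i j => if i = j then 1 else 0
  | n + 1 => fun i j => ∑' k : ℕ, pPowFrom b C l n i (l + k) * pMat b C (l + k) j

/-- entries of the `n`-th power of a general matrix indexed by `ℕ`. -/
noncomputable def matPow (q : ℕ → ℕ → ℝ) : ℕ → ℕ → ℕ → ℝ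
  | 0 => fun i j => if i = j then 1 else 0
  | n + 1 => fun i j => ∑' k : ℕ, matPow q n i k * q k j

/-- irreducibility of a non-negative matrix indexed by `ℕ`. -/
def MatIrred (q : ℕ → ℕ → ℝ) : Prop := ∀ i j, ∃ n, 1 ≤ n ∧ 0 < matPow q n i j

/-- irreducibility of the finite sub-matrix `(q(i,j))_{i,j < N}`. -/
def FinIrred (q : ℕ → ℕ → ℝ) (N : ℕ) : Prop :=
  ∀ i j, i < N → j < N → ∃ m, 1 ≤ m ∧ ∃ c : ℕ → ℕ,
    c 0 = i ∧ c m = j ∧ (∀ t ≤ m, c t < N) ∧ ∀ t < m, 0 < q (c t) (c (t + 1))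

/-!
Positivity of `p(x, y)` is monotone: if `x ≥ 1` and `p(x, y) > 0`, then `p(x', y') > 0` whenever
`x ≤ x'` and `y' ≤ y`. Indeed, a witness sequence for `p(x, y)` can be extended by `x' - x` further
failures, and `y - y'` of its ones can be turned into twos (here `b ≥ 2` is used) without changing
its weight.

A path of positive steps from `a` to `a'` crosses every level `u ∈ [a, a']` by a step `x → y` with
`x ≤ u ≤ y`, and even with `x < u` when `u > a`; as `0` is absorbing, `x ≥ 1` once `u ≥ 1`.
By monotonicity, `p(u, v) > 0` for all `v ≤ u`, and `p(u - 1, u) > 0` when `u > a`. Inside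
`[a, a']` one can therefore jump down anywhere and climb one step at a time.
-/

theorem _root_.Relation.TransGen.exists_crossing {α : Type*} {r : α → α → Prop}
    {P Q : α → Prop} {s e : α} (h : Relation.TransGen r s e) (hs : P s) (he : Q e)
    (hPQ : ∀ z, P z ∨ Q z) : ∃ x y, r x y ∧ P x ∧ Q y := by
  induction h with
  | single hse => exact ⟨s, _, hse, hs, he⟩
  | @tail m y _ hmy ih =>
    rcases hPQ m with hm | hm
    · exact ⟨m, y, hmy, hm, he⟩
    · exact ih hm

theorem _root_.Fin.card_filter_snoc {α : Type*} {N : ℕ} (p : α → Prop) [DecidablePred p]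
    (e : Fin N → α) (v : α) :
    (Finset.univ.filter fun k => p (Fin.snoc (α := fun _ => α) e v k)).card =
      (Finset.univ.filter fun k => p (e k)).card + if p v then 1 else 0 := by
  simp only [Finset.card_filter, Fin.sum_univ_castSucc, Fin.snoc_castSucc, Fin.snoc_last]

namespace Env

variable (C : Env) {i : ℕ}

lemma str_nonneg (hi : 1 ≤ i) : 0 ≤ C.str i := by
  unfold str
  split_ifs with h
  exacts [(C.hp i hi h).1, C.hq0.le]

lemma str_lt_one (hi : 1 ≤ i) : C.str i < 1 := by
  unfold str
  split_ifs with h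
  exacts [(C.hp i hi h).2, C.hq1]

lemma exists_str_le : ∃ ρ < 1, ∀ i, 1 ≤ i → C.str i ≤ ρ := by
  have hne : (Finset.Icc 1 (C.M + 1)).Nonempty := ⟨1, by simp⟩
  refine ⟨(Finset.Icc 1 (C.M + 1)).sup' hne C.str,
    (Finset.sup'_lt_iff hne).2 fun i hi => C.str_lt_one (Finset.mem_Icc.1 hi).1, fun i hi => ?_⟩
  rcases le_or_gt i (C.M + 1) with hiM | hiM
  · exact Finset.le_sup' C.str (Finset.mem_Icc.2 ⟨hi, hiM⟩)
  · have hq : C.str i = C.str (C.M + 1) := by simp [str, show ¬i ≤ C.M by omega]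
    exact hq ▸ Finset.le_sup' C.str (Finset.mem_Icc.2 ⟨by omega, le_rfl⟩)

end Env

section Weights

variable (b : ℕ) (C : Env) {i : ℕ}

lemma xiProb_nonneg (hi : 1 ≤ i) (v : ℕ) : 0 ≤ xiProb b C i v := by
  have := C.str_lt_one hi
  unfold xiProb
  split_ifs
  exacts [by linarith, div_nonneg (C.str_nonneg hi) b.cast_nonneg, le_rfl]

lemma xiProb_zero_pos (hi : 1 ≤ i) : 0 < xiProb b C i 0 := by
  simpa [xiProb] using C.str_lt_one hi

lemma xiProb_le_of_ne_zero (hi : 1 ≤ i) {ρ : ℝ} (hρ : C.str i ≤ ρ) {v : ℕ} (hv : v ≠ 0) :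
    xiProb b C i v ≤ ρ / b := by
  have hρ0 := (C.str_nonneg hi).trans hρ
  simp only [xiProb, if_neg hv]
  split_ifs
  exacts [div_le_div_of_nonneg_right hρ b.cast_nonneg, by positivity]

lemma xiProb_eq_of_ne_zero {v w : ℕ} (hv : v ≠ 0) (hvb : v ≤ b) (hw : w ≠ 0) (hwb : w ≤ b) :
    xiProb b C i v = xiProb b C i w := by
  simp [xiProb, hv, hvb, hw, hwb]

lemma seqWeight_nonneg {N : ℕ} (e : Fin N → Fin (b + 1)) : 0 ≤ seqWeight b C e :=
  Finset.prod_nonneg fun k _ => xiProb_nonneg b C k.1.succ_pos _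

lemma seqWeight_snoc {N : ℕ} (e : Fin N → Fin (b + 1)) (v : Fin (b + 1)) :
    seqWeight b C (Fin.snoc e v : Fin (N + 1) → Fin (b + 1)) =
      seqWeight b C e * xiProb b C (N + 1) v := by
  simp [seqWeight, Fin.prod_univ_castSucc]

lemma seqWeight_update {N : ℕ} (e : Fin N → Fin (b + 1)) (k : Fin N) (v : Fin (b + 1))
    (hv : xiProb b C (k.1 + 1) v = xiProb b C (k.1 + 1) (e k)) :
    seqWeight b C (Function.update e k v) = seqWeight b C e := by
  refine Finset.prod_congr rfl fun l _ => ?_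
  rcases eq_or_ne l k with rfl | hl
  · simpa using hv
  · rw [Function.update_of_ne hl]

end Weights

/-- The sequences `(ξ_1, …, ξ_N)` whose last term is the `i`-th failure and which contain exactly
`j` ones: the `N`-th summand of `pMat b C i j` is the weight of this event. -/
def rowEvent (b N i j : ℕ) : Finset (Fin N → Fin (b + 1)) :=
  Finset.univ.filter fun e =>
    (Finset.univ.filter fun k => (e k).1 = 0).card = i ∧
    (Finset.univ.filter fun k => (e k).1 = 1).card = j ∧
    ∀ k : Fin N, k.1 + 1 = N → (e k).1 = 0

section RowEvent

variable (b : ℕ) (C : Env) {i j : ℕ}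

lemma mem_rowEvent {N : ℕ} {e : Fin N → Fin (b + 1)} :
    e ∈ rowEvent b N i j ↔
      (Finset.univ.filter fun k => (e k).1 = 0).card = i ∧
      (Finset.univ.filter fun k => (e k).1 = 1).card = j ∧
      ∀ k : Fin N, k.1 + 1 = N → (e k).1 = 0 := by
  simp [rowEvent]

lemma pMat_eq_tsum (hi : i ≠ 0) :
    pMat b C i j = ∑' N, ∑ e ∈ rowEvent b N i j, seqWeight b C e := by
  simp only [pMat, if_neg hi]
  rfl

/-- Weighting each failure by `ε` turns the sum over sequences into a product of one-letter sums,
each at most `ε + ρ`. -/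
lemma sum_rowEvent_mul_pow_le {ε ρ : ℝ} (hε : 0 ≤ ε) (hρ : ∀ i, 1 ≤ i → C.str i ≤ ρ)
    (N i j : ℕ) : (∑ e ∈ rowEvent b N i j, seqWeight b C e) * ε ^ i ≤ (ε + ρ) ^ N := by
  have hρ0 : 0 ≤ ρ := (C.str_nonneg le_rfl).trans (hρ 1 le_rfl)
  set g : Fin (b + 1) → ℝ := fun v => if v.1 = 0 then ε else ρ / b with hg
  have hg0 : ∀ v, 0 ≤ g v := fun v => by positivity
  have hsum : ∑ v, g v ≤ ε + ρ := by
    rw [Fin.sum_univ_succ]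
    simp only [hg, Fin.val_zero, Fin.val_succ, if_true, Nat.succ_ne_zero, if_false,
      Finset.sum_const, Finset.card_univ, Fintype.card_fin, nsmul_eq_mul]
    rcases eq_or_ne (b : ℝ) 0 with hb | hb
    · simp [hb, hρ0]
    · rw [mul_div_cancel₀ ρ hb]
  have hterm : ∀ e ∈ rowEvent b N i j, seqWeight b C e * ε ^ i ≤ ∏ k, g (e k) := by
    intro e he
    rw [← (mem_rowEvent b).1 he |>.1, ← Finset.prod_const, Finset.prod_filter, seqWeight,
      ← Finset.prod_mul_distrib]
    refine Finset.prod_le_prod (fun k _ => ?_) (fun k _ => ?_)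
    · have := xiProb_nonneg b C k.1.succ_pos (e k).1
      positivity
    · have hk := k.1.succ_pos
      by_cases hv : (e k).1 = 0
      · have := C.str_nonneg hk
        simp only [hg, hv, if_true, xiProb]
        nlinarith
      · simp only [hg, hv, if_false, mul_one]
        exact xiProb_le_of_ne_zero b C hk (hρ _ hk) hv
  calc (∑ e ∈ rowEvent b N i j, seqWeight b C e) * ε ^ i
      = ∑ e ∈ rowEvent b N i j, seqWeight b C e * ε ^ i := Finset.sum_mul _ _ _
    _ ≤ ∑ e ∈ rowEvent b N i j, ∏ k, g (e k) := Finset.sum_le_sum hterm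
    _ ≤ ∑ e : Fin N → Fin (b + 1), ∏ k, g (e k) :=
        Finset.sum_le_univ_sum_of_nonneg fun e => Finset.prod_nonneg fun k _ => hg0 _
    _ = (∑ v, g v) ^ N := by simp [← Fintype.prod_sum]
    _ ≤ (ε + ρ) ^ N := pow_le_pow_left₀ (Finset.sum_nonneg fun v _ => hg0 v) hsum N

lemma summable_sum_rowEvent (i j : ℕ) :
    Summable fun N => ∑ e ∈ rowEvent b N i j, seqWeight b C e := by
  obtain ⟨ρ, hρ1, hρ⟩ := C.exists_str_le
  have hρ0 : 0 ≤ ρ := (C.str_nonneg le_rfl).trans (hρ 1 le_rfl)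
  obtain ⟨ε, hε, hερ⟩ : ∃ ε, 0 < ε ∧ ε + ρ < 1 := ⟨(1 - ρ) / 2, by linarith, by linarith⟩
  have hgeom := (summable_geometric_of_lt_one (r := ε + ρ) (by positivity) hερ).mul_left (ε ^ i)⁻¹
  refine .of_nonneg_of_le (fun N => Finset.sum_nonneg fun e _ => seqWeight_nonneg b C e)
    (fun N => ?_) hgeom
  rw [← div_eq_inv_mul, le_div_iff₀ (by positivity)]
  exact sum_rowEvent_mul_pow_le b C hε.le hρ N i j

lemma pMat_pos_iff (hi : i ≠ 0) :
    0 < pMat b C i j ↔ ∃ N, ∃ e ∈ rowEvent b N i j, 0 < seqWeight b C e := by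
  have hnonneg N : 0 ≤ ∑ e ∈ rowEvent b N i j, seqWeight b C e :=
    Finset.sum_nonneg fun e _ => seqWeight_nonneg b C e
  simp_rw [← Finset.sum_pos_iff_of_nonneg fun e _ => seqWeight_nonneg b C e, pMat_eq_tsum b C hi]
  constructor
  · intro h
    by_contra! hz
    exact h.not_ge (tsum_nonpos hz)
  · rintro ⟨N, hN⟩
    exact (summable_sum_rowEvent b C i j).tsum_pos hnonneg N hN

end RowEvent

section Monotone

variable (b : ℕ) (C : Env) {i j : ℕ}

lemma pMat_succ_left_pos (hi : i ≠ 0) (h : 0 < pMat b C i j) : 0 < pMat b C (i + 1) j := by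
  obtain ⟨N, e, he, hw⟩ := (pMat_pos_iff b C hi).1 h
  obtain ⟨h0, h1, -⟩ := (mem_rowEvent b).1 he
  refine (pMat_pos_iff b C i.succ_ne_zero).2
    ⟨N + 1, Fin.snoc e 0, (mem_rowEvent b).2 ⟨?_, ?_, ?_⟩, ?_⟩
  · exact (Fin.card_filter_snoc (fun v : Fin (b + 1) => v.1 = 0) e 0).trans (by simp only [h0]; rfl)
  · exact (Fin.card_filter_snoc (fun v : Fin (b + 1) => v.1 = 1) e 0).trans (by simp only [h1]; rfl)
  · intro k hk
    obtain rfl : k = Fin.last N := Fin.ext (by rw [Fin.val_last]; omega)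
    simp
  · rw [seqWeight_snoc]
    exact mul_pos hw (xiProb_zero_pos b C N.succ_pos)

lemma pMat_pos_of_succ_right (hb : 2 ≤ b) (hi : i ≠ 0) (h : 0 < pMat b C i (j + 1)) :
    0 < pMat b C i j := by
  obtain ⟨N, e, he, hw⟩ := (pMat_pos_iff b C hi).1 h
  obtain ⟨h0, h1, hlast⟩ := (mem_rowEvent b).1 he
  obtain ⟨k, hk⟩ : (Finset.univ.filter fun k => (e k).1 = 1).Nonempty :=
    Finset.card_pos.1 (h1 ▸ j.succ_pos)
  replace hk : (e k).1 = 1 := (Finset.mem_filter.1 hk).2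
  obtain ⟨two, htwo⟩ : ∃ two : Fin (b + 1), two.1 = 2 := ⟨⟨2, by omega⟩, rfl⟩
  have hupd : ∀ l, (Function.update e k two l).1 = if l = k then 2 else (e l).1 := fun l => by
    rcases eq_or_ne l k with rfl | hl
    · simp [htwo]
    · simp [hl]
  refine (pMat_pos_iff b C hi).2 ⟨N, Function.update e k two, (mem_rowEvent b).2 ⟨?_, ?_, ?_⟩, ?_⟩
  · rw [← h0]
    congr 1
    ext l
    simp only [Finset.mem_filter, Finset.mem_univ, true_and, hupd]
    split_ifs with hl
    · simp [hl, hk]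
    · rfl
  · have hones : (Finset.univ.filter fun l => (Function.update e k two l).1 = 1) =
        (Finset.univ.filter fun l => (e l).1 = 1).erase k := by
      ext l
      simp only [Finset.mem_filter, Finset.mem_univ, true_and, hupd, Finset.mem_erase]
      split_ifs with hl <;> simp [hl]
    rw [hones, Finset.card_erase_of_mem (by simp [hk]), h1, Nat.add_sub_cancel]
  · intro l hl
    have hlk : l ≠ k := by rintro rfl; simp [hlast l hl] at hk
    simpa [hupd, hlk] using hlast l hl
  · rwa [seqWeight_update b C e k two
      (xiProb_eq_of_ne_zero b C (by simp [htwo]) (by omega) (by simp [hk]) (by omega))]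

lemma pMat_pos_mono (hb : 2 ≤ b) {x y x' y' : ℕ} (hx : x ≠ 0) (hxx' : x ≤ x') (hyy' : y' ≤ y)
    (h : 0 < pMat b C x y) : 0 < pMat b C x' y' := by
  have hy' : 0 < pMat b C x y' :=
    Nat.decreasingInduction (motive := fun k _ => 0 < pMat b C x k)
      (fun k _ hk => pMat_pos_of_succ_right b C hb hx hk) h hyy'
  induction x', hxx' using Nat.le_induction with
  | base => exact hy'
  | succ n hxn ih => exact pMat_succ_left_pos b C (by omega) ih

end Monotone

section Paths

variable (b : ℕ) (C : Env) {i j : ℕ}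

lemma pMat_nonneg (i j : ℕ) : 0 ≤ pMat b C i j := by
  rcases eq_or_ne i 0 with rfl | hi
  · simp only [pMat]
    split_ifs <;> norm_num
  · rw [pMat_eq_tsum b C hi]
    exact tsum_nonneg fun N => Finset.sum_nonneg fun e _ => seqWeight_nonneg b C e

lemma ne_zero_of_pMat_pos (h : 0 < pMat b C i j) (hj : j ≠ 0) : i ≠ 0 := by
  rintro rfl
  simp [pMat, hj] at h

lemma pPow_nonneg (n i j : ℕ) : 0 ≤ pPow b C n i j := by
  induction n generalizing j with
  | zero =>
    unfold pPow
    split_ifs <;> norm_num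
  | succ n ih => exact tsum_nonneg fun k => mul_nonneg (ih k) (pMat_nonneg b C k j)

lemma exists_of_pPow_succ_pos {n : ℕ} (h : 0 < pPow b C (n + 1) i j) :
    ∃ k, 0 < pPow b C n i k ∧ 0 < pMat b C k j := by
  obtain ⟨k, hk⟩ : ∃ k, 0 < pPow b C n i k * pMat b C k j := by
    by_contra! hz
    exact h.not_ge (tsum_nonpos hz)
  exact ⟨k, pos_of_mul_pos_left hk (pMat_nonneg b C k j),
    pos_of_mul_pos_right hk (pPow_nonneg b C n i k)⟩

lemma reflTransGen_of_pPow_pos {n : ℕ} (h : 0 < pPow b C n i j) :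
    Relation.ReflTransGen (fun x y => 0 < pMat b C x y) i j := by
  induction n generalizing j with
  | zero =>
    obtain rfl : i = j := by
      by_contra hij
      simp [pPow, hij] at h
    exact .refl
  | succ n ih =>
    obtain ⟨k, hik, hkj⟩ := exists_of_pPow_succ_pos b C h
    exact (ih hik).tail hkj

lemma transGen_of_acc (h : acc b C i j) : Relation.TransGen (fun x y => 0 < pMat b C x y) i j := by
  obtain ⟨n, hn, hpos⟩ := h
  obtain ⟨n, rfl⟩ := Nat.exists_eq_add_of_le' hn
  obtain ⟨k, hik, hkj⟩ := exists_of_pPow_succ_pos b C hpos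
  exact .tail' (reflTransGen_of_pPow_pos b C hik) hkj

lemma pMat_pos_of_le_of_transGen (hb : 2 ≤ b) {a a' x y : ℕ}
    (hpath : Relation.TransGen (fun x y => 0 < pMat b C x y) a a')
    (hax : a ≤ x) (hxa' : x ≤ a') (hyx : y ≤ x) : 0 < pMat b C x y := by
  rcases eq_or_ne x 0 with rfl | hx
  · obtain rfl : y = 0 := by omega
    simp [pMat]
  obtain ⟨x₀, y₀, hstep, hx₀, hy₀⟩ :=
    hpath.exists_crossing (P := (· ≤ x)) (Q := (x ≤ ·)) hax hxa' fun z => le_total z x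
  exact pMat_pos_mono b C hb (ne_zero_of_pMat_pos b C hstep (by omega)) hx₀ (hyx.trans hy₀) hstep

lemma pMat_succ_pos_of_transGen (hb : 2 ≤ b) {a a' u : ℕ}
    (hpath : Relation.TransGen (fun x y => 0 < pMat b C x y) a a')
    (hau : a ≤ u) (hua' : u < a') : 0 < pMat b C u (u + 1) := by
  obtain ⟨x₀, y₀, hstep, hx₀, hy₀⟩ :=
    hpath.exists_crossing (P := (· < u + 1)) (Q := (u + 1 ≤ ·)) (by omega) hua'
      fun z => lt_or_ge z (u + 1)
  exact pMat_pos_mono b C hb (ne_zero_of_pMat_pos b C hstep (by omega)) (by omega) hy₀ hstep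

end Paths

theorem submatrix_irreducible_general
    (b : ℕ) (hb : 2 ≤ b) (C : Env) (a a' : ℕ)
    (h : macc b C a a') :
    ∀ i j : ℕ, a ≤ i → i ≤ a' → a ≤ j → j ≤ a' →
      ∃ m, 1 ≤ m ∧ ∃ c : ℕ → ℕ,
        c 0 = i ∧ c m = j ∧ (∀ t ≤ m, a ≤ c t ∧ c t ≤ a') ∧
        ∀ t < m, 0 < pMat b C (c t) (c (t + 1)) := by
  intro i j hai hia' haj hja'
  have hpath := transGen_of_acc b C h.1
  rcases le_or_gt j i with hji | hij
  · refine ⟨1, le_rfl, fun t => if t = 0 then i else j, rfl, rfl, fun t _ => ?_, fun t ht => ?_⟩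
    · dsimp only
      split_ifs <;> omega
    · obtain rfl : t = 0 := by omega
      exact pMat_pos_of_le_of_transGen b C hb hpath hai hia' hji
  · refine ⟨j - i, by omega, fun t => i + t, rfl, by dsimp only; omega,
      fun t ht => by dsimp only; omega,
      fun t ht => pMat_succ_pos_of_transGen b C hb hpath (u := i + t) (by omega) (by omega)⟩

/-- **Lemma 4.2**. If `a ≤ a'` and `a ↔ a'`, then the finite sub-matrix
`(p(i,j))_{a ≤ i,j ≤ a'}` is irreducible : any two indices of `[a,a']` are joined by
a path with positive transition weights staying inside `[a,a']`. -/
theorem submatrix_irreducible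
    (b : ℕ) (hb : 2 ≤ b) (C : Env) (a a' : ℕ) (haa : a ≤ a')
    (h : macc b C a a') :
    ∀ i j : ℕ, a ≤ i → i ≤ a' → a ≤ j → j ≤ a' →
      ∃ m, 1 ≤ m ∧ ∃ c : ℕ → ℕ,
        c 0 = i ∧ c m = j ∧ (∀ t ≤ m, a ≤ c t ∧ c t ≤ a') ∧
        ∀ t < m, 0 < pMat b C (c t) (c (t + 1)) :=
  submatrix_irreducible_general b hb C a a' h

end CookieRW
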